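/- The maximal quantum winning probability of the GYNI game equals the maximal classical winning probability: ω_q = ω_c = max_x [q(x) + q(x̄)], for any input distribution q. -/

import Mathlib

open ComplexOrder

/-- Tensor product over the `N` parties of local matrices. -/
def tensProd {N : ℕ} {d : Fin N → ℕ}
    (M : (i : Fin N) → Matrix (Fin (d i)) (Fin (d i)) ℂ) :
    Matrix ((i : Fin N) → Fin (d i)) ((i : Fin N) → Fin (d i)) ℂ :=
  Matrix.of fun u v => ∏ i, M i (u i) (v i)

/-!
Classically, the players can agree on an input pattern `x₀` and let each player answer as if the
inputs were `x₀` or its complement, whichever matches its own bit: they win exactly on `x₀` and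
on its complement.

Conversely, a Naimark dilation turns every player's POVMs into projections on a common larger
space, so the winning operator of an input `x` becomes the compression of a projection `P x`.
If `y` is neither `x` nor its complement, then some player sees the same bit in `x` and `y` but
has to answer differently, so `P x * P y = 0`. Hence, for every set `S` of inputs containing no
complementary pair, `∑ x ∈ S, P x` is a projection, and the winning probabilities satisfy
`∑ x ∈ S, t x ≤ 1`. Keeping from each pair `{x, x̄}` the input with the larger `t` gives such an
`S`, and `∑ x, q x * t x ≤ ∑ x ∈ S, (q x + q x̄) * t x ≤ max_x (q x + q x̄)`.
-/

open Finset Matrix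
open scoped MatrixOrder

lemma IsStarProjection.sum {κ R : Type*} [NonUnitalNonAssocSemiring R] [StarRing R]
    {s : Finset κ} {p : κ → R} (hp : ∀ i ∈ s, IsStarProjection (p i))
    (horth : ∀ i ∈ s, ∀ j ∈ s, i ≠ j → p i * p j = 0) :
    IsStarProjection (∑ i ∈ s, p i) := by
  classical
  induction s using Finset.induction_on with
  | empty => simp
  | insert a s ha ih =>
    rw [sum_insert ha]
    refine (hp a (mem_insert_self a s)).add
      (ih (fun i hi => hp i (mem_insert_of_mem hi))
        fun i hi j hj => horth i (mem_insert_of_mem hi) j (mem_insert_of_mem hj)) ?_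
    rw [mul_sum]
    exact sum_eq_zero fun j hj =>
      horth a (mem_insert_self a s) j (mem_insert_of_mem hj) fun h => ha (h ▸ hj)

namespace Matrix

section piKronecker

variable {ι R : Type*} [Fintype ι] [CommSemiring R] {α β γ : ι → Type*}

def piKronecker (A : ∀ i, Matrix (α i) (β i) R) : Matrix (∀ i, α i) (∀ i, β i) R :=
  of fun u v => ∏ i, A i (u i) (v i)

@[simp]
lemma piKronecker_apply (A : ∀ i, Matrix (α i) (β i) R) (u : ∀ i, α i) (v : ∀ i, β i) :
    piKronecker A u v = ∏ i, A i (u i) (v i) :=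
  rfl

lemma piKronecker_mul [DecidableEq ι] [∀ i, Fintype (β i)] (A : ∀ i, Matrix (α i) (β i) R)
    (B : ∀ i, Matrix (β i) (γ i) R) :
    piKronecker A * piKronecker B = piKronecker fun i => A i * B i := by
  ext u v
  simp only [mul_apply, piKronecker_apply, Fintype.prod_sum, prod_mul_distrib]

lemma conjTranspose_piKronecker [StarRing R] (A : ∀ i, Matrix (α i) (β i) R) :
    (piKronecker A)ᴴ = piKronecker fun i => (A i)ᴴ := by
  ext u v
  simp [star_prod]

lemma piKronecker_eq_zero {A : ∀ i, Matrix (α i) (β i) R} (i : ι) (hi : A i = 0) :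
    piKronecker A = 0 := by
  ext u v
  simp [prod_eq_zero (mem_univ i), hi]

lemma piKronecker_submatrix {α' β' : ι → Type*} (A : ∀ i, Matrix (α i) (β i) R)
    (e : ∀ i, α' i → α i) (f : ∀ i, β' i → β i) :
    piKronecker (fun i => (A i).submatrix (e i) (f i)) =
      (piKronecker A).submatrix (fun u i => e i (u i)) (fun v i => f i (v i)) :=
  rfl

lemma _root_.IsStarProjection.piKronecker [DecidableEq ι] [∀ i, Fintype (α i)] [StarRing R]
    {P : ∀ i, Matrix (α i) (α i) R} (hP : ∀ i, IsStarProjection (P i)) :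
    IsStarProjection (piKronecker P) where
  isIdempotentElem := by
    rw [IsIdempotentElem, piKronecker_mul]
    exact congrArg _ (funext fun i => (hP i).isIdempotentElem.eq)
  isSelfAdjoint := by
    rw [IsSelfAdjoint, star_eq_conjTranspose, conjTranspose_piKronecker]
    exact congrArg _ (funext fun i => (hP i).isSelfAdjoint.star_eq)

end piKronecker

lemma isStarProjection_fromBlocks {m R : Type*} [Fintype m] [DecidableEq m] [CommRing R]
    [StarRing R] {A B : Matrix m m R} (hA : IsSelfAdjoint A) (hB : IsSelfAdjoint B)
    (hAB : Commute A B) (hBB : B * B = A * (1 - A)) :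
    IsStarProjection (fromBlocks A B B (1 - A)) where
  isIdempotentElem := by
    rw [IsIdempotentElem, fromBlocks_multiply, hBB]
    congr 1 <;> simp only [mul_sub, sub_mul, mul_one, one_mul, hAB.eq] <;> abel
  isSelfAdjoint := by
    rw [IsSelfAdjoint, star_eq_conjTranspose, fromBlocks_conjTranspose, ← star_eq_conjTranspose,
      ← star_eq_conjTranspose, ← star_eq_conjTranspose, hA.star_eq, hB.star_eq, star_sub, star_one,
      hA.star_eq]

section RCLike

variable {m n 𝕜 : Type*} [RCLike 𝕜]

lemma submatrix_nonneg {A : Matrix n n 𝕜} (hA : 0 ≤ A) (e : m → n) : 0 ≤ A.submatrix e e :=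
  (hA.posSemidef.submatrix e).nonneg

lemma submatrix_mono {A B : Matrix n n 𝕜} (h : A ≤ B) (e : m → n) :
    A.submatrix e e ≤ B.submatrix e e :=
  le_iff.mpr ((le_iff.mp h).submatrix e)

variable [Fintype m] [DecidableEq m] [Fintype n] [DecidableEq n]

lemma PosSemidef.trace_mul_nonneg {A B : Matrix n n 𝕜} (hA : A.PosSemidef) (hB : B.PosSemidef) :
    0 ≤ (A * B).trace := by
  set s := CFC.sqrt B
  have hs : sᴴ = s := (CFC.sqrt_nonneg B).isSelfAdjoint
  have hss : s * s = B := CFC.sqrt_mul_sqrt_self B hB.nonneg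
  calc 0 ≤ (sᴴ * A * s).trace := (hA.conjTranspose_mul_mul_same s).trace_nonneg
    _ = (A * B).trace := by rw [hs, trace_mul_cycle, hss, trace_mul_comm]

lemma PosSemidef.trace_mul_mono {ρ A B : Matrix n n 𝕜} (hρ : ρ.PosSemidef) (h : A ≤ B) :
    (ρ * A).trace ≤ (ρ * B).trace := by
  have := hρ.trace_mul_nonneg (le_iff.mp h)
  rwa [mul_sub, trace_sub, sub_nonneg] at this

noncomputable def naimarkDilation (A : Matrix m m 𝕜) : Matrix (m ⊕ m) (m ⊕ m) 𝕜 :=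
  fromBlocks A (CFC.sqrt A * CFC.sqrt (1 - A)) (CFC.sqrt A * CFC.sqrt (1 - A)) (1 - A)

lemma isStarProjection_naimarkDilation {A : Matrix m m 𝕜} (h0 : 0 ≤ A) (h1 : A ≤ 1) :
    IsStarProjection (naimarkDilation A) := by
  set a := CFC.sqrt A
  set b := CFC.sqrt (1 - A)
  have ha : IsSelfAdjoint a := (CFC.sqrt_nonneg A).isSelfAdjoint
  have hb : IsSelfAdjoint b := (CFC.sqrt_nonneg (1 - A)).isSelfAdjoint
  have haa : a * a = A := CFC.sqrt_mul_sqrt_self A h0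
  have hbb : b * b = 1 - A := CFC.sqrt_mul_sqrt_self (1 - A) (sub_nonneg.mpr h1)
  -- both square roots are functions of `A`
  have hab : Commute a b :=
    (((Commute.one_right A).sub_right (Commute.refl A)).cfcₙ_nnreal NNReal.sqrt).symm.cfcₙ_nnreal
      NNReal.sqrt |>.symm
  refine isStarProjection_fromBlocks h0.isSelfAdjoint ?_ ?_ ?_
  · rw [IsSelfAdjoint, star_mul, ha.star_eq, hb.star_eq, hab.eq]
  · have := ((Commute.refl a).mul_right hab).mul_left ((Commute.refl a).mul_right hab)
    rwa [haa] at this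
  · rw [hab.symm.mul_mul_mul_comm, haa, hbb]

noncomputable def povmDilation (E : Bool → Matrix m m 𝕜) (a : Bool) :
    Matrix (m ⊕ m) (m ⊕ m) 𝕜 :=
  if a then 1 - naimarkDilation (E false) else naimarkDilation (E false)

variable {E : Bool → Matrix m m 𝕜}

lemma isStarProjection_povmDilation (hE : ∀ a, 0 ≤ E a) (hsum : E false + E true = 1)
    (a : Bool) : IsStarProjection (povmDilation E a) := by
  have := isStarProjection_naimarkDilation (hE false) (hsum ▸ le_add_of_nonneg_right (hE true))
  cases a
  · exact this
  · exact this.one_sub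

lemma povmDilation_mul_of_ne (hE : ∀ a, 0 ≤ E a) (hsum : E false + E true = 1) {a a' : Bool}
    (h : a ≠ a') : povmDilation E a * povmDilation E a' = 0 := by
  have := isStarProjection_naimarkDilation (hE false) (hsum ▸ le_add_of_nonneg_right (hE true))
  cases a <;> cases a' <;> simp_all [povmDilation, this.mul_one_sub_self, this.one_sub_mul_self]

lemma povmDilation_submatrix_inl (hE : E false + E true = 1) (a : Bool) :
    (povmDilation E a).submatrix Sum.inl Sum.inl = E a := by
  have : (naimarkDilation (E false)).submatrix Sum.inl Sum.inl = E false :=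
    toBlocks_fromBlocks₁₁ ..
  cases a
  · exact this
  · rw [povmDilation, if_pos rfl, submatrix_sub, Pi.sub_apply, Pi.sub_apply, this,
      submatrix_one _ Sum.inl_injective, ← hE, add_sub_cancel_left]

end RCLike

end Matrix

open Fin.NatCast in
theorem Fin.forall_of_add_one_closed {N : ℕ} [NeZero N] {P : Fin N → Prop} (j : Fin N)
    (hj : P j) (h : ∀ i, P i → P (i + 1)) (i : Fin N) : P i := by
  have key : ∀ k : ℕ, P (j + k) := by
    intro k
    induction k with
    | zero => simpa using hj
    | succ k ih => simpa [add_assoc] using h _ ih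
  simpa using key (i - j).val

theorem eq_or_eq_not_of_forall_eq_imp_eq_add_one {N : ℕ} [NeZero N] {x y : Fin N → Bool}
    (h : ∀ i, x i = y i → x (i + 1) = y (i + 1)) : y = x ∨ y = fun i => !x i := by
  by_cases hxy : ∃ j, x j = y j
  · obtain ⟨j, hj⟩ := hxy
    exact Or.inl (funext (Fin.forall_of_add_one_closed j hj h) |>.symm)
  · refine Or.inr (funext fun i => ?_)
    have := fun h => hxy ⟨i, h⟩
    revert this
    cases x i <;> cases y i <;> simp

theorem Function.Involutive.exists_finset_pick_max {α β : Type*} [Fintype α] [LinearOrder β]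
    {c : α → α} (hc : Function.Involutive c) (p : α → Prop) [DecidablePred p]
    (hp : ∀ x, p (c x) ↔ ¬ p x) (t : α → β) :
    ∃ S : Finset α, (∀ x ∈ S, c x ∉ S) ∧ ∀ x ∉ S, c x ∈ S ∧ t x ≤ t (c x) := by
  -- ties between `x` and `c x` are broken in favour of the one satisfying `p`
  let keep (x : α) : Prop := if p x then t (c x) ≤ t x else t (c x) < t x
  have keep_c : ∀ x, keep (c x) ↔ ¬ keep x := by
    intro x
    by_cases h : p x <;> simp [keep, h, hp, hc x]
  refine ⟨univ.filter keep, fun x hx hcx => ?_, fun x hx => ?_⟩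
  · simp only [mem_filter, mem_univ, true_and] at hx hcx
    exact (keep_c x).mp hcx hx
  · simp only [mem_filter, mem_univ, true_and] at hx ⊢
    refine ⟨(keep_c x).mpr hx, ?_⟩
    by_cases h : p x <;> simp only [keep, h, if_true, if_false, not_le, not_lt] at hx
    exacts [hx.le, hx]

theorem sum_mul_le_sup'_of_sum_le_one {α : Type*} [Fintype α] [Nonempty α] {c : α → α}
    (hc : Function.Involutive c) (p : α → Prop) [DecidablePred p] (hp : ∀ x, p (c x) ↔ ¬ p x)
    {q t : α → ℝ} (hq : ∀ x, 0 ≤ q x) (ht : ∀ x, 0 ≤ t x)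
    (hS : ∀ S : Finset α, (∀ x ∈ S, c x ∉ S) → ∑ x ∈ S, t x ≤ 1) :
    ∑ x, q x * t x ≤ univ.sup' univ_nonempty fun x => q x + q (c x) := by
  classical
  set C := univ.sup' univ_nonempty fun x => q x + q (c x)
  have hC : ∀ x, q x + q (c x) ≤ C := fun x => le_sup' (fun x => q x + q (c x)) (mem_univ x)
  have hC0 : 0 ≤ C := (add_nonneg (hq _) (hq _)).trans (hC (Classical.arbitrary α))
  obtain ⟨S, hfree, hmax⟩ := hc.exists_finset_pick_max p hp t
  have hcover : ∀ x, t x ≤ (if x ∈ S then t x else 0) + (if c x ∈ S then t (c x) else 0) := by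
    intro x
    by_cases hx : x ∈ S
    · simp [hx, hfree x hx]
    · simpa [hx, (hmax x hx).1] using (hmax x hx).2
  have hswap : ∑ x, (if c x ∈ S then q x * t (c x) else 0) =
      ∑ x, (if x ∈ S then q (c x) * t x else 0) := by
    rw [← Equiv.sum_comp (hc.toPerm c)]
    simp [hc _]
  calc ∑ x, q x * t x
      ≤ ∑ x, q x * ((if x ∈ S then t x else 0) + (if c x ∈ S then t (c x) else 0)) :=
        sum_le_sum fun x _ => mul_le_mul_of_nonneg_left (hcover x) (hq x)
    _ = ∑ x ∈ S, (q x + q (c x)) * t x := by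
        simp only [mul_add, mul_ite, mul_zero, sum_add_distrib, hswap, Fintype.sum_ite_mem,
          add_mul]
    _ ≤ ∑ x ∈ S, C * t x := sum_le_sum fun x _ => mul_le_mul_of_nonneg_right (hC x) (ht x)
    _ ≤ C := by
        rw [← mul_sum]
        exact mul_le_of_le_one_right hC0 (hS S hfree)

namespace GYNI

variable {N : ℕ}

def detPOVM (f : Fin N → Bool → Bool) (i : Fin N) (b a : Bool) : Matrix (Fin 1) (Fin 1) ℂ :=
  if f i b = a then 1 else 0

lemma posSemidef_detPOVM (f : Fin N → Bool → Bool) (i : Fin N) (b a : Bool) :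
    (detPOVM f i b a).PosSemidef := by
  unfold detPOVM
  split
  · exact .one
  · exact .zero

lemma detPOVM_false_add_true (f : Fin N → Bool → Bool) (i : Fin N) (b : Bool) :
    detPOVM f i b false + detPOVM f i b true = 1 := by
  cases h : f i b <;> simp [detPOVM, h]

variable [NeZero N]

noncomputable def winProb {d : Fin N → ℕ}
    (ρ : Matrix ((i : Fin N) → Fin (d i)) ((i : Fin N) → Fin (d i)) ℂ)
    (M : (i : Fin N) → Bool → Bool → Matrix (Fin (d i)) (Fin (d i)) ℂ) (x : Fin N → Bool) : ℝ :=
  ((ρ * tensProd fun i => M i (x i) (x (i + 1))).trace).re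

lemma winProb_detPOVM (f : Fin N → Bool → Bool) (x : Fin N → Bool) :
    winProb 1 (detPOVM f) x = if ∀ i, f i (x i) = x (i + 1) then 1 else 0 := by
  simp [winProb, tensProd, detPOVM, trace, apply_ite (fun X : Matrix (Fin 1) (Fin 1) ℂ => X 0 0),
    apply_ite Complex.re, prod_boole]

def guess (x₀ : Fin N → Bool) (i : Fin N) (b : Bool) : Bool :=
  if b = x₀ i then x₀ (i + 1) else !x₀ (i + 1)

lemma forall_guess_eq_iff (x₀ x : Fin N → Bool) :
    (∀ i, guess x₀ i (x i) = x (i + 1)) ↔ x = x₀ ∨ x = fun i => !x₀ i := by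
  constructor
  · intro h
    refine eq_or_eq_not_of_forall_eq_imp_eq_add_one fun i hi => ?_
    simpa [guess, hi] using h i
  · rintro (rfl | rfl) i <;> simp [guess]

lemma sum_mul_winProb_guess (q : (Fin N → Bool) → ℝ) (x₀ : Fin N → Bool) :
    ∑ x, q x * winProb 1 (detPOVM (guess x₀)) x = q x₀ + q fun i => !x₀ i := by
  have hne : x₀ ≠ fun i => !x₀ i := fun h => by simpa using congrFun h 0
  have hwin : univ.filter (fun x => x = x₀ ∨ x = fun i => !x₀ i) = {x₀, fun i => !x₀ i} := by
    ext x
    simp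
  simp_rw [winProb_detPOVM, forall_guess_eq_iff, mul_ite, mul_one, mul_zero]
  rw [← sum_filter, hwin, sum_pair hne]

section dilation

variable {d : Fin N → ℕ} {M : (i : Fin N) → Bool → Bool → Matrix (Fin (d i)) (Fin (d i)) ℂ}

noncomputable def dilatedWinProj (M : (i : Fin N) → Bool → Bool → Matrix (Fin (d i)) (Fin (d i)) ℂ)
    (x : Fin N → Bool) :
    Matrix (∀ i, Fin (d i) ⊕ Fin (d i)) (∀ i, Fin (d i) ⊕ Fin (d i)) ℂ :=
  piKronecker fun i => povmDilation (M i (x i)) (x (i + 1))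

lemma tensProd_eq_submatrix_dilatedWinProj (hpovm : ∀ i b, M i b false + M i b true = 1)
    (x : Fin N → Bool) :
    tensProd (fun i => M i (x i) (x (i + 1))) =
      (dilatedWinProj M x).submatrix (fun u i => Sum.inl (u i)) (fun u i => Sum.inl (u i)) := by
  rw [dilatedWinProj, ← piKronecker_submatrix]
  simp_rw [povmDilation_submatrix_inl (hpovm _ _)]
  rfl

lemma isStarProjection_dilatedWinProj (hM : ∀ i b a, (M i b a).PosSemidef)
    (hpovm : ∀ i b, M i b false + M i b true = 1) (x : Fin N → Bool) :
    IsStarProjection (dilatedWinProj M x) :=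
  .piKronecker fun i => isStarProjection_povmDilation (fun a => (hM i _ a).nonneg) (hpovm i _) _

lemma dilatedWinProj_mul_eq_zero (hM : ∀ i b a, (M i b a).PosSemidef)
    (hpovm : ∀ i b, M i b false + M i b true = 1) {x y : Fin N → Bool} {i : Fin N}
    (hi : x i = y i) (hi' : x (i + 1) ≠ y (i + 1)) :
    dilatedWinProj M x * dilatedWinProj M y = 0 := by
  rw [dilatedWinProj, dilatedWinProj, piKronecker_mul]
  refine piKronecker_eq_zero i ?_
  rw [hi]
  exact povmDilation_mul_of_ne (fun a => (hM i _ a).nonneg) (hpovm i _) hi'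

lemma tensProd_nonneg (hM : ∀ i b a, (M i b a).PosSemidef)
    (hpovm : ∀ i b, M i b false + M i b true = 1) (x : Fin N → Bool) :
    0 ≤ tensProd (fun i => M i (x i) (x (i + 1))) := by
  rw [tensProd_eq_submatrix_dilatedWinProj hpovm]
  exact submatrix_nonneg (isStarProjection_dilatedWinProj hM hpovm x).nonneg _

lemma sum_tensProd_le_one (hM : ∀ i b a, (M i b a).PosSemidef)
    (hpovm : ∀ i b, M i b false + M i b true = 1) {S : Finset (Fin N → Bool)}
    (hS : ∀ x ∈ S, (fun i => !x i) ∉ S) :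
    ∑ x ∈ S, tensProd (fun i => M i (x i) (x (i + 1))) ≤ 1 := by
  set e : (∀ i, Fin (d i)) → ∀ i, Fin (d i) ⊕ Fin (d i) := fun u i => Sum.inl (u i)
  have he : Function.Injective e := fun u v h => funext fun i => Sum.inl_injective (congrFun h i)
  have hproj : IsStarProjection (∑ x ∈ S, dilatedWinProj M x) := by
    refine .sum (fun x _ => isStarProjection_dilatedWinProj hM hpovm x) fun x hx y hy hxy => ?_
    obtain ⟨i, hi, hi'⟩ : ∃ i, x i = y i ∧ x (i + 1) ≠ y (i + 1) := by
      by_contra! h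
      rcases eq_or_eq_not_of_forall_eq_imp_eq_add_one h with rfl | rfl
      exacts [hxy rfl, hS x hx hy]
    exact dilatedWinProj_mul_eq_zero hM hpovm hi hi'
  calc ∑ x ∈ S, tensProd (fun i => M i (x i) (x (i + 1)))
      = (∑ x ∈ S, dilatedWinProj M x).submatrix e e := by
        simp_rw [tensProd_eq_submatrix_dilatedWinProj hpovm]
        ext
        simp [e, Matrix.sum_apply]
    _ ≤ (1 : Matrix _ _ ℂ).submatrix e e := submatrix_mono hproj.le_one e
    _ = 1 := submatrix_one e he

variable {ρ : Matrix ((i : Fin N) → Fin (d i)) ((i : Fin N) → Fin (d i)) ℂ}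

lemma winProb_nonneg (hρ : ρ.PosSemidef) (hM : ∀ i b a, (M i b a).PosSemidef)
    (hpovm : ∀ i b, M i b false + M i b true = 1) (x : Fin N → Bool) :
    0 ≤ winProb ρ M x :=
  (Complex.le_def.mp
    (hρ.trace_mul_nonneg (tensProd_nonneg hM hpovm x).posSemidef)).1

lemma sum_winProb_le_one (hρ : ρ.PosSemidef) (hρ1 : ρ.trace = 1)
    (hM : ∀ i b a, (M i b a).PosSemidef) (hpovm : ∀ i b, M i b false + M i b true = 1)
    {S : Finset (Fin N → Bool)} (hS : ∀ x ∈ S, (fun i => !x i) ∉ S) :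
    ∑ x ∈ S, winProb ρ M x ≤ 1 := by
  have := (Complex.le_def.mp (hρ.trace_mul_mono (sum_tensProd_le_one hM hpovm hS))).1
  rwa [mul_one, hρ1, mul_sum, trace_sum, Complex.re_sum, Complex.one_re] at this

lemma sum_mul_winProb_le {q : (Fin N → Bool) → ℝ} (hq : ∀ x, 0 ≤ q x) (hρ : ρ.PosSemidef)
    (hρ1 : ρ.trace = 1) (hM : ∀ i b a, (M i b a).PosSemidef)
    (hpovm : ∀ i b, M i b false + M i b true = 1) :
    ∑ x, q x * winProb ρ M x ≤ univ.sup' univ_nonempty fun x => q x + q fun i => !x i :=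
  sum_mul_le_sup'_of_sum_le_one (c := fun x i => !x i) (fun x => funext fun i => Bool.not_not _)
    (fun x => x 0 = true) (fun x => by simp) hq (winProb_nonneg hρ hM hpovm)
    fun _ hS => sum_winProb_le_one hρ hρ1 hM hpovm hS

end dilation

end GYNI

/-- The maximal quantum winning probability of the GYNI game (over all shared
states `ρ` and local two-outcome POVMs `M i b a` on Hilbert spaces of arbitrary
finite dimensions) equals the maximal classical winning probability
`max_x (q x + q x̄)`, for any input distribution `q`. -/
theorem gyni_quantum_eq_classical (N : ℕ) [NeZero N]
    (q : (Fin N → Bool) → ℝ) (hq : ∀ x, 0 ≤ q x) :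
    IsGreatest
      {w : ℝ | ∃ (d : Fin N → ℕ)
        (ρ : Matrix ((i : Fin N) → Fin (d i)) ((i : Fin N) → Fin (d i)) ℂ)
        (M : (i : Fin N) → Bool → Bool → Matrix (Fin (d i)) (Fin (d i)) ℂ),
        ρ.PosSemidef ∧ ρ.trace = 1 ∧
        (∀ i b a, (M i b a).PosSemidef) ∧
        (∀ i b, M i b false + M i b true = 1) ∧
        w = ∑ x : Fin N → Bool, q x *
          ((ρ * tensProd (fun i => M i (x i) (x (i + 1)))).trace).re}
      (Finset.univ.sup' Finset.univ_nonempty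
        (fun x : Fin N → Bool => q x + q (fun i => !x i))) := by
  obtain ⟨x₀, -, hx₀⟩ :=
    exists_mem_eq_sup' univ_nonempty fun x : Fin N → Bool => q x + q fun i => !x i
  refine ⟨⟨fun _ => 1, 1, GYNI.detPOVM (GYNI.guess x₀), .one, by simp,
    GYNI.posSemidef_detPOVM _, GYNI.detPOVM_false_add_true _, ?_⟩, ?_⟩
  · rw [hx₀]
    exact (GYNI.sum_mul_winProb_guess q x₀).symm
  · rintro w ⟨d, ρ, M, hρ, hρ1, hM, hpovm, rfl⟩
    exact GYNI.sum_mul_winProb_le hq hρ hρ1 hM hpovm
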